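/- arXiv:2407.13731 — 4 statements merged into one kernel-verified Lean document; each statement's English description precedes it below -/
import Mathlib

section
/- Let X ∈ ℝ^{n×m} and let k be a natural number. Then rank(X) ≤ k if and only if there exists a symmetric matrix P ∈ ℝ^{n×n} with P² = P, Tr(P) ≤ k, and P X = X. -/
/-!
The trace of an idempotent matrix is its rank, since it is the trace of a projection onto its
range. Hence `P * X = X` gives `rank X ≤ rank P = tr P`; conversely, the orthogonal projection
onto the column space of `X` is a symmetric idempotent with trace `rank X` that fixes `X`.
-/

open Matrix

namespace Matrix

variable {n m : Type*} [Fintype n] [DecidableEq n]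

theorem trace_eq_rank_of_isIdempotentElem {K : Type*} [Field K] {P : Matrix n n K}
    (hP : IsIdempotentElem P) : P.trace = P.rank := by
  have h : IsIdempotentElem P.mulVecLin := hP.map (toLinAlgEquiv' (R := K))
  rw [rank, ← (LinearMap.IsIdempotentElem.isProj_range _ h).trace, ← trace_toLin'_eq]
  rfl

omit [DecidableEq n] in
theorem rank_eq_finrank_range_toLpLin {R : Type*} [CommRing R] [Fintype m] [DecidableEq m]
    (p q : ENNReal) (X : Matrix n m R) :
    X.rank = Module.finrank R (LinearMap.range (toLpLin p q X)) :=
  rank_eq_finrank_range_toLin X (PiLp.basisFun q R n) (PiLp.basisFun p R m)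

variable {𝕜 : Type*} [RCLike 𝕜] [Fintype m] [DecidableEq m] (X : Matrix n m 𝕜)

noncomputable def rangeStarProjection : Matrix n n 𝕜 :=
  (toEuclideanCLM (n := n) (𝕜 := 𝕜)).symm (LinearMap.range (toLpLin 2 2 X)).starProjection

theorem isStarProjection_rangeStarProjection : IsStarProjection X.rangeStarProjection :=
  isStarProjection_starProjection.map (toEuclideanCLM (n := n) (𝕜 := 𝕜)).symm

theorem toLpLin_rangeStarProjection :
    toLpLin 2 2 X.rangeStarProjection = (LinearMap.range (toLpLin 2 2 X)).starProjection :=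
  congrArg ContinuousLinearMap.toLinearMap ((toEuclideanCLM (n := n) (𝕜 := 𝕜)).apply_symm_apply _)

theorem rank_rangeStarProjection : X.rangeStarProjection.rank = X.rank := by
  rw [rank_eq_finrank_range_toLpLin 2 2, rank_eq_finrank_range_toLpLin 2 2,
    toLpLin_rangeStarProjection]
  exact congrArg (fun V : Submodule 𝕜 (EuclideanSpace 𝕜 n) => Module.finrank 𝕜 V)
    (Submodule.range_starProjection _)

theorem rangeStarProjection_mul_self : X.rangeStarProjection * X = X := by
  apply (toLpLin 2 2).injective
  rw [toLpLin_mul _ 2, toLpLin_rangeStarProjection]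
  ext v : 1
  exact Submodule.starProjection_eq_self_iff.mpr (LinearMap.mem_range_self _ v)

end Matrix

/-- `rank(X) ≤ k` iff there is a symmetric idempotent matrix `P` with `Tr(P) ≤ k`
and `P X = X`. -/
theorem rank_le_iff_exists_projection {n m : ℕ} (X : Matrix (Fin n) (Fin m) ℝ) (k : ℕ) :
    X.rank ≤ k ↔
      ∃ P : Matrix (Fin n) (Fin n) ℝ,
        Pᵀ = P ∧ P * P = P ∧ P.trace ≤ (k : ℝ) ∧ P * X = X := by
  constructor
  · intro hX
    have hP := X.isStarProjection_rangeStarProjection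
    refine ⟨X.rangeStarProjection, hP.isSelfAdjoint, hP.isIdempotentElem, ?_,
      X.rangeStarProjection_mul_self⟩
    rw [trace_eq_rank_of_isIdempotentElem hP.isIdempotentElem, rank_rangeStarProjection]
    exact_mod_cast hX
  · rintro ⟨P, -, hP, hPk, hPX⟩
    rw [trace_eq_rank_of_isIdempotentElem hP] at hPk
    calc X.rank = (P * X).rank := by rw [hPX]
      _ ≤ P.rank := rank_mul_le_left P X
      _ ≤ k := by exact_mod_cast hPk
end

section
/- Let Z ∈ ℝ^{n×m}, U ∈ ℝ^{n×k}, and V ∈ ℝ^{m×k} be real matrices such that Z = U Vᵀ. Then ‖Z‖_* ≤ (1/2)(‖U‖_F² + ‖V‖_F²). -/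
/-!
Diagonalize `Zᵀ Z` by orthonormal eigenvectors `qᵢ` with eigenvalues `λᵢ`, so that
`‖Z‖_* = ∑ √λᵢ`. For `λᵢ ≠ 0` the vectors `pᵢ = Z qᵢ / √λᵢ` are orthonormal and
`√λᵢ = pᵢ ⬝ Z qᵢ = (Uᵀ pᵢ) ⬝ (Vᵀ qᵢ) ≤ ½ (‖Uᵀ pᵢ‖² + ‖Vᵀ qᵢ‖²)`.
Summing over `i`, Bessel's inequality for the columns of `U` against `(pᵢ)` and for the columns
of `V` against `(qᵢ)` bounds the two sums by `‖U‖_F²` and `‖V‖_F²`.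
-/

open Matrix

/-- The positive semidefinite square root of a positive semidefinite matrix
(the definition `Matrix.PosSemidef.sqrt` of the older Mathlib, since removed). -/
noncomputable def Matrix.PosSemidef.sqrt {n 𝕜 : Type*} [Fintype n] [DecidableEq n] [RCLike 𝕜]
    [PartialOrder 𝕜] {A : Matrix n n 𝕜} (hA : A.PosSemidef) : Matrix n n 𝕜 :=
  hA.1.eigenvectorUnitary.1 * diagonal ((↑) ∘ (√·) ∘ hA.1.eigenvalues) *
  (star hA.1.eigenvectorUnitary : Matrix n n 𝕜)

/-- The nuclear norm of a real matrix: the trace of the positive-semidefinite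
square root of `Xᵀ * X` (i.e. the sum of the singular values of `X`). -/
noncomputable def nuclearNorm {n m : ℕ} (X : Matrix (Fin n) (Fin m) ℝ) : ℝ :=
  ((Matrix.posSemidef_conjTranspose_mul_self X).sqrt).trace

namespace Matrix

theorem PosSemidef.trace_sqrt {n 𝕜 : Type*} [Fintype n] [DecidableEq n] [RCLike 𝕜]
    [PartialOrder 𝕜] {A : Matrix n n 𝕜} (hA : A.PosSemidef) :
    hA.sqrt.trace = ∑ i, ((√(hA.1.eigenvalues i) : ℝ) : 𝕜) := by
  rw [PosSemidef.sqrt, trace_mul_cycle, Unitary.coe_star_mul_self, one_mul, trace_diagonal]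
  rfl

variable {ι n m k : Type*} [Fintype ι] [Fintype n] [Fintype m] [Fintype k]

theorem dotProduct_le_half_add_self (a b : n → ℝ) :
    a ⬝ᵥ b ≤ 1 / 2 * (a ⬝ᵥ a + b ⬝ᵥ b) := by
  simp only [dotProduct, ← Finset.sum_add_distrib, Finset.mul_sum]
  exact Finset.sum_le_sum fun i _ => by nlinarith [sq_nonneg (a i - b i)]

theorem sum_transpose_mulVec_dotProduct_le_trace (W : Matrix n k ℝ)
    {v : ι → EuclideanSpace ℝ n} (hv : Orthonormal ℝ v) :
    ∑ i, (Wᵀ *ᵥ v i) ⬝ᵥ (Wᵀ *ᵥ v i) ≤ (Wᵀ * W).trace := by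
  have hcol (x : EuclideanSpace ℝ n) :
      (Wᵀ *ᵥ x) ⬝ᵥ (Wᵀ *ᵥ x) = ∑ j, ‖inner ℝ x (WithLp.toLp 2 (Wᵀ j))‖ ^ 2 := by
    simp [dotProduct, mulVec, EuclideanSpace.inner_eq_star_dotProduct, sq]
  have htrace : (Wᵀ * W).trace = ∑ j, ‖WithLp.toLp 2 (Wᵀ j)‖ ^ 2 := by
    simp_rw [EuclideanSpace.real_norm_sq_eq]
    simp [trace, mul_apply, sq]
  rw [htrace, Finset.sum_congr rfl fun i _ => hcol (v i), Finset.sum_comm]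
  exact Finset.sum_le_sum fun j _ => hv.sum_inner_products_le _

theorem sum_dotProduct_mul_transpose_mulVec_le (U : Matrix n k ℝ) (V : Matrix m k ℝ)
    {p : ι → EuclideanSpace ℝ n} {q : ι → EuclideanSpace ℝ m}
    (hp : Orthonormal ℝ p) (hq : Orthonormal ℝ q) :
    ∑ i, p i ⬝ᵥ ((U * Vᵀ) *ᵥ q i) ≤ 1 / 2 * ((Uᵀ * U).trace + (Vᵀ * V).trace) :=
  calc ∑ i, p i ⬝ᵥ ((U * Vᵀ) *ᵥ q i) = ∑ i, (Uᵀ *ᵥ p i) ⬝ᵥ (Vᵀ *ᵥ q i) := by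
        simp only [← mulVec_mulVec, dotProduct_mulVec, mulVec_transpose]
    _ ≤ ∑ i, 1 / 2 * ((Uᵀ *ᵥ p i) ⬝ᵥ (Uᵀ *ᵥ p i) + (Vᵀ *ᵥ q i) ⬝ᵥ (Vᵀ *ᵥ q i)) :=
        Finset.sum_le_sum fun i _ => dotProduct_le_half_add_self _ _
    _ = 1 / 2 * (∑ i, (Uᵀ *ᵥ p i) ⬝ᵥ (Uᵀ *ᵥ p i) + ∑ i, (Vᵀ *ᵥ q i) ⬝ᵥ (Vᵀ *ᵥ q i)) := by
        rw [← Finset.mul_sum, Finset.sum_add_distrib]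
    _ ≤ 1 / 2 * ((Uᵀ * U).trace + (Vᵀ * V).trace) := by
        gcongr
        · exact sum_transpose_mulVec_dotProduct_le_trace U hp
        · exact sum_transpose_mulVec_dotProduct_le_trace V hq

variable [DecidableEq m] {Z : Matrix n m ℝ} (hA : (Zᴴ * Z).IsHermitian)

theorem IsHermitian.mulVec_eigenvectorBasis_dotProduct (i j : m) :
    (Z *ᵥ hA.eigenvectorBasis i) ⬝ᵥ (Z *ᵥ hA.eigenvectorBasis j) =
      if i = j then hA.eigenvalues i else 0 := by
  have hq := orthonormal_iff_ite.mp hA.eigenvectorBasis.orthonormal j i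
  rw [EuclideanSpace.inner_eq_star_dotProduct, star_trivial] at hq
  rw [← vecMul_transpose, ← dotProduct_mulVec, mulVec_mulVec,
    ← conjTranspose_eq_transpose_of_trivial, hA.mulVec_eigenvectorBasis, dotProduct_smul,
    smul_eq_mul, hq]
  rcases eq_or_ne i j with rfl | hij
  · simp
  · simp [hij, hij.symm]

-- Since `0⁻¹ = 0`, this vanishes when the eigenvalue does.
noncomputable def leftSingularVector (i : m) : EuclideanSpace ℝ n :=
  WithLp.toLp 2 ((√(hA.eigenvalues i))⁻¹ • (Z *ᵥ hA.eigenvectorBasis i))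

theorem sqrt_eigenvalues_eq_leftSingularVector_dotProduct (i : m) :
    √(hA.eigenvalues i) = leftSingularVector hA i ⬝ᵥ (Z *ᵥ hA.eigenvectorBasis i) := by
  rw [leftSingularVector, smul_dotProduct, hA.mulVec_eigenvectorBasis_dotProduct, if_pos rfl,
    smul_eq_mul, inv_mul_eq_div, Real.div_sqrt]

theorem orthonormal_leftSingularVector :
    Orthonormal ℝ fun i : {i // hA.eigenvalues i ≠ 0} => leftSingularVector hA i := by
  rw [orthonormal_iff_ite]
  rintro ⟨i, hi⟩ ⟨j, hj⟩
  simp only [leftSingularVector, EuclideanSpace.inner_eq_star_dotProduct, star_trivial,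
    smul_dotProduct, dotProduct_smul, hA.mulVec_eigenvectorBasis_dotProduct]
  rcases eq_or_ne i j with rfl | hij
  · have hnonneg : 0 ≤ hA.eigenvalues i :=
      (posSemidef_conjTranspose_mul_self Z).eigenvalues_nonneg i
    rw [if_pos rfl, if_pos rfl, smul_eq_mul, smul_eq_mul, ← mul_assoc, ← mul_inv,
      Real.mul_self_sqrt hnonneg, inv_mul_cancel₀ hi]
  · simp [hij, hij.symm]

end Matrix

theorem nuclearNorm_eq_sum_leftSingularVector_dotProduct {n m : ℕ}
    {Z : Matrix (Fin n) (Fin m) ℝ} (hA : (Zᴴ * Z).IsHermitian) :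
    nuclearNorm Z = ∑ i : {i // hA.eigenvalues i ≠ 0},
      leftSingularVector hA i ⬝ᵥ (Z *ᵥ hA.eigenvectorBasis i) :=
  calc nuclearNorm Z = ∑ i, √(hA.eigenvalues i) := PosSemidef.trace_sqrt _
    _ = ∑ i : {i // hA.eigenvalues i ≠ 0}, √(hA.eigenvalues i) := by
        rw [← Finset.sum_filter_of_ne (p := fun i => hA.eigenvalues i ≠ 0)]
        · exact Finset.sum_subtype _ (by simp) _
        · exact fun i _ hi h => hi (Real.sqrt_eq_zero'.2 h.le)
    _ = _ := Finset.sum_congr rfl fun i _ =>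
        sqrt_eigenvalues_eq_leftSingularVector_dotProduct hA i

/-- For any factorization `Z = U Vᵀ`, the nuclear norm of `Z` is at most
`(1/2)(‖U‖_F² + ‖V‖_F²)`. -/
theorem nuclearNorm_le_half_frobenius {n m k : ℕ}
    (Z : Matrix (Fin n) (Fin m) ℝ)
    (U : Matrix (Fin n) (Fin k) ℝ) (V : Matrix (Fin m) (Fin k) ℝ)
    (hZ : Z = U * Vᵀ) :
    nuclearNorm Z ≤ (1 / 2) * ((Uᵀ * U).trace + (Vᵀ * V).trace) := by
  subst hZ
  rw [nuclearNorm_eq_sum_leftSingularVector_dotProduct (posSemidef_conjTranspose_mul_self _).1]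
  exact sum_dotProduct_mul_transpose_mulVec_le U V (orthonormal_leftSingularVector _)
    ((IsHermitian.eigenvectorBasis _).orthonormal.comp _ Subtype.val_injective)
end

section
/- Let X ∈ ℝ^{n×m}, let P ∈ ℝ^{n×n} be symmetric with P² = P and P X = X, and let M > 0 be a real number with ‖X‖_σ ≤ M. Then the (n+m)×(n+m) block matrix [[M·P, X], [Xᵀ, M·I_m]] is positive semidefinite. -/
/-!
Taking the Schur complement of the invertible block `M • 1`, the block matrix is positive
semidefinite iff `M² P - X Xᵀ` is. As `P` is an orthogonal projection fixing the columns of `X`,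
`M² P - X Xᵀ = P (M² - X Xᵀ) Pᵀ`, and `M² - X Xᵀ ⪰ 0` because `‖Xᵀ v‖ ≤ ‖X‖ ‖v‖ ≤ M ‖v‖`.
-/

open Matrix

/-- The spectral norm of a real matrix: its ℓ²→ℓ² operator norm
(i.e. the largest singular value of `X`). -/
noncomputable def matrixSpectralNorm {n m : ℕ} (X : Matrix (Fin n) (Fin m) ℝ) : ℝ :=
  ‖LinearMap.toContinuousLinearMap (Matrix.toEuclideanLin X)‖

open scoped Matrix.Norms.L2Operator ComplexOrder

lemma matrixSpectralNorm_eq_norm {n m : ℕ} (X : Matrix (Fin n) (Fin m) ℝ) :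
    matrixSpectralNorm X = ‖X‖ :=
  rfl

namespace Matrix

variable {𝕜 m n : Type*} [RCLike 𝕜] [Fintype m] [Fintype n]

lemma star_dotProduct_self_eq_norm_sq (v : n → 𝕜) :
    star v ⬝ᵥ v = (‖WithLp.toLp 2 v‖ : 𝕜) ^ 2 := by
  rw [← inner_self_eq_norm_sq_to_K, EuclideanSpace.inner_eq_star_dotProduct, dotProduct_comm]

lemma star_dotProduct_mul_conjTranspose_mulVec (X : Matrix m n 𝕜) (v : m → 𝕜) :
    star v ⬝ᵥ (X * Xᴴ) *ᵥ v = (‖WithLp.toLp 2 (Xᴴ *ᵥ v)‖ : 𝕜) ^ 2 := by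
  rw [← mulVec_mulVec, dotProduct_mulVec, ← star_dotProduct_self_eq_norm_sq, star_mulVec,
    conjTranspose_conjTranspose]

lemma PosSemidef.fromBlocks_smul_one [DecidableEq n] {A : Matrix m m 𝕜} {B : Matrix m n 𝕜}
    {M : ℝ} (hM : 0 < M) (h : (M ^ 2 • A - B * Bᴴ).PosSemidef) :
    (fromBlocks (M • A) B Bᴴ (M • 1)).PosSemidef := by
  have hinv : (M⁻¹ • 1 : Matrix n n 𝕜) * (M • 1) = 1 := by
    rw [smul_mul_smul_comm, inv_mul_cancel₀ hM.ne', one_mul, one_smul]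
  let := invertibleOfLeftInverse _ _ hinv
  rw [PosDef.fromBlocks₂₂ _ _ (PosDef.one.smul hM), inv_eq_left_inv hinv, Matrix.mul_smul,
    Matrix.mul_one, Matrix.smul_mul]
  have hschur : M • A - M⁻¹ • (B * Bᴴ) = M⁻¹ • (M ^ 2 • A - B * Bᴴ) := by
    rw [smul_sub, smul_smul, inv_mul_eq_div, sq, mul_self_div_self]
  exact hschur ▸ h.smul (inv_nonneg.2 hM.le)

variable [DecidableEq m] [DecidableEq n]

lemma posSemidef_sq_smul_one_sub_mul_conjTranspose_of_norm_le {X : Matrix m n 𝕜} {M : ℝ}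
    (hX : ‖X‖ ≤ M) :
    (M ^ 2 • (1 : Matrix m m 𝕜) - X * Xᴴ).PosSemidef := by
  refine .of_dotProduct_mulVec_nonneg ?_ fun v => ?_
  · simp [IsHermitian]
  have hXv : ‖WithLp.toLp 2 (Xᴴ *ᵥ v)‖ ≤ M * ‖WithLp.toLp 2 v‖ :=
    calc _ ≤ ‖Xᴴ‖ * ‖WithLp.toLp 2 v‖ := Xᴴ.l2_opNorm_mulVec (WithLp.toLp 2 v)
      _ = ‖X‖ * ‖WithLp.toLp 2 v‖ := by rw [l2_opNorm_conjTranspose]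
      _ ≤ M * ‖WithLp.toLp 2 v‖ := by gcongr
  have hquad : star v ⬝ᵥ (M ^ 2 • (1 : Matrix m m 𝕜) - X * Xᴴ) *ᵥ v
      = ((M ^ 2 * ‖WithLp.toLp 2 v‖ ^ 2 - ‖WithLp.toLp 2 (Xᴴ *ᵥ v)‖ ^ 2 : ℝ) : 𝕜) := by
    rw [sub_mulVec, dotProduct_sub, star_dotProduct_mul_conjTranspose_mulVec, smul_mulVec,
      one_mulVec, dotProduct_smul, star_dotProduct_self_eq_norm_sq]
    push_cast [RCLike.real_smul_eq_coe_mul]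
    rfl
  rw [hquad, RCLike.ofReal_nonneg, sub_nonneg]
  calc _ ≤ (M * ‖WithLp.toLp 2 v‖) ^ 2 := by gcongr
    _ = _ := by ring

lemma posSemidef_sq_smul_sub_mul_conjTranspose_of_isStarProjection {P : Matrix m m 𝕜}
    {X : Matrix m n 𝕜} {M : ℝ} (hP : IsStarProjection P) (hPX : P * X = X) (hX : ‖X‖ ≤ M) :
    (M ^ 2 • P - X * Xᴴ).PosSemidef := by
  have hPP : P * Pᴴ = P := by
    rw [← star_eq_conjTranspose, hP.isSelfAdjoint.star_eq, hP.isIdempotentElem.eq]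
  have hconj : P * (M ^ 2 • 1 - X * Xᴴ) * Pᴴ = M ^ 2 • P - X * Xᴴ := by
    rw [Matrix.mul_sub, Matrix.sub_mul, Matrix.mul_smul, Matrix.mul_one, Matrix.smul_mul, hPP,
      ← Matrix.mul_assoc, hPX, Matrix.mul_assoc, ← conjTranspose_mul, hPX]
  exact hconj ▸
    (posSemidef_sq_smul_one_sub_mul_conjTranspose_of_norm_le hX).mul_mul_conjTranspose_same P

end Matrix

/-- If `P` is a symmetric idempotent with `P X = X` and `‖X‖_σ ≤ M` with `M > 0`,
then the block matrix `[[M P, X], [Xᵀ, M I]]` is positive semidefinite. -/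
theorem blockMatrix_posSemidef {n m : ℕ}
    (X : Matrix (Fin n) (Fin m) ℝ) (P : Matrix (Fin n) (Fin n) ℝ) (M : ℝ)
    (hM : 0 < M) (hPsym : Pᵀ = P) (hPidem : P * P = P) (hPX : P * X = X)
    (hXM : matrixSpectralNorm X ≤ M) :
    (Matrix.fromBlocks (M • P) X Xᵀ (M • (1 : Matrix (Fin m) (Fin m) ℝ))).PosSemidef := by
  have hP : IsStarProjection P :=
    ⟨hPidem, by
      rw [IsSelfAdjoint, star_eq_conjTranspose, conjTranspose_eq_transpose_of_trivial, hPsym]⟩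
  rw [matrixSpectralNorm_eq_norm] at hXM
  rw [← conjTranspose_eq_transpose_of_trivial]
  exact PosSemidef.fromBlocks_smul_one hM
    (posSemidef_sq_smul_sub_mul_conjTranspose_of_isStarProjection hP hPX hXM)
end

section
/- Let P ∈ ℝ^{n×n} be symmetric with P² = P, let Φ, Ψ, U ∈ ℝ^{n×k}, and let ρ₁ > 0, ρ₂ > 0. Define f : ℝ^{n×k} → ℝ by f(Z) = Tr(Φᵀ(I_n − P)Z) + Tr(ΨᵀZ) + (ρ₁/2)‖(I_n − P)Z‖_F² + (ρ₂/2)‖Z − U‖_F². Then f has a unique global minimizer, given by Z̄ = (1/(ρ₁+ρ₂))(I_n + (ρ₁/ρ₂)P)(ρ₂U − (I_n − P)Φ − Ψ). -/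
open Matrix

lemma trace_symmA {n k : ℕ} (A C : Matrix (Fin n) (Fin k) ℝ) :
    (Aᵀ * C).trace = (Cᵀ * A).trace := by
  rw [← Matrix.trace_transpose (Aᵀ * C), Matrix.transpose_mul, Matrix.transpose_transpose]

lemma trace_sq_nonneg {n k : ℕ} (A : Matrix (Fin n) (Fin k) ℝ) :
    0 ≤ (Aᵀ * A).trace := by
  simp only [Matrix.trace, Matrix.diag, Matrix.mul_apply, Matrix.transpose_apply]
  exact Finset.sum_nonneg fun j _ => Finset.sum_nonneg fun i _ => mul_self_nonneg _

lemma trace_sq_eq_zero {n k : ℕ} {A : Matrix (Fin n) (Fin k) ℝ}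
    (h : (Aᵀ * A).trace = 0) : A = 0 := by
  ext i j
  simp only [Matrix.trace, Matrix.diag, Matrix.mul_apply, Matrix.transpose_apply] at h
  have h1 := (Finset.sum_eq_zero_iff_of_nonneg (fun j _ => Finset.sum_nonneg fun i _ => mul_self_nonneg (A i j))).mp h j (Finset.mem_univ j)
  have h2 := (Finset.sum_eq_zero_iff_of_nonneg (fun i _ => mul_self_nonneg (A i j))).mp h1 i (Finset.mem_univ i)
  simpa [mul_self_eq_zero] using h2

/-- The `Z`-subproblem objective
`f(Z) = Tr(Φᵀ(I−P)Z) + Tr(ΨᵀZ) + (ρ₁/2)‖(I−P)Z‖_F² + (ρ₂/2)‖Z−U‖_F²`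
has the unique global minimizer `Z̄ = (1/(ρ₁+ρ₂))(I + (ρ₁/ρ₂)P)(ρ₂U − (I−P)Φ − Ψ)`. -/
theorem Z_subproblem_unique_minimizer {n k : ℕ}
    (P : Matrix (Fin n) (Fin n) ℝ) (hPsym : Pᵀ = P) (hPidem : P * P = P)
    (Φ Ψ U : Matrix (Fin n) (Fin k) ℝ)
    (ρ₁ ρ₂ : ℝ) (h1 : 0 < ρ₁) (h2 : 0 < ρ₂) :
    let f : Matrix (Fin n) (Fin k) ℝ → ℝ := fun Z =>
      (Φᵀ * (((1 : Matrix (Fin n) (Fin n) ℝ) - P) * Z)).trace + (Ψᵀ * Z).trace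
        + (ρ₁ / 2) * (((((1 : Matrix (Fin n) (Fin n) ℝ) - P) * Z)ᵀ *
            (((1 : Matrix (Fin n) (Fin n) ℝ) - P) * Z)).trace)
        + (ρ₂ / 2) * (((Z - U)ᵀ * (Z - U)).trace)
    let Zbar := (1 / (ρ₁ + ρ₂)) •
      (((1 : Matrix (Fin n) (Fin n) ℝ) + (ρ₁ / ρ₂) • P) *
        (ρ₂ • U - ((1 : Matrix (Fin n) (Fin n) ℝ) - P) * Φ - Ψ))
    (∀ Z, f Zbar ≤ f Z) ∧ (∀ Z, f Z = f Zbar → Z = Zbar) := by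
  intro f Zbar
  set Q : Matrix (Fin n) (Fin n) ℝ := (1 : Matrix (Fin n) (Fin n) ℝ) - P with hQdef
  set M : Matrix (Fin n) (Fin n) ℝ := (1 : Matrix (Fin n) (Fin n) ℝ) + (ρ₁ / ρ₂) • P with hMdef
  set V : Matrix (Fin n) (Fin k) ℝ := ρ₂ • U - Q * Φ - Ψ with hVdef
  have hQsym : Qᵀ = Q := by
    rw [hQdef, Matrix.transpose_sub, Matrix.transpose_one, hPsym]
  have hQ2 : Q * Q = Q := by
    rw [hQdef, sub_mul, one_mul, mul_sub, mul_one, hPidem]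
    abel
  have hQM : Q * M = Q := by
    rw [hMdef, mul_add, mul_one, Matrix.mul_smul]
    have : Q * P = 0 := by rw [hQdef, sub_mul, one_mul, hPidem, sub_self]
    rw [this, smul_zero, add_zero]
  have hsum : ρ₁ • Q + ρ₂ • M = (ρ₁ + ρ₂) • (1 : Matrix (Fin n) (Fin n) ℝ) := by
    rw [hQdef, hMdef, smul_add, smul_smul, mul_div_cancel₀ _ h2.ne']
    module
  have hZbar : Zbar = (1 / (ρ₁ + ρ₂)) • (M * V) := rfl
  have hρ : ρ₁ + ρ₂ ≠ 0 := by positivity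
  have hstat : ρ₁ • (Q * Zbar) + ρ₂ • Zbar = V := by
    rw [hZbar, Matrix.mul_smul, ← Matrix.mul_assoc, hQM]
    rw [smul_comm ρ₁, smul_comm ρ₂, ← smul_add, ← Matrix.smul_mul, ← Matrix.smul_mul,
      ← Matrix.add_mul, hsum, Matrix.smul_mul, Matrix.one_mul, smul_smul, one_div,
      inv_mul_cancel₀ hρ, one_smul]
  have key : ∀ Z, f Z = f Zbar
      + (ρ₁ / 2) * ((Q * (Z - Zbar))ᵀ * (Q * (Z - Zbar))).trace
      + (ρ₂ / 2) * ((Z - Zbar)ᵀ * (Z - Zbar)).trace := by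
    intro Z
    obtain ⟨D, rfl⟩ : ∃ D, Z = Zbar + D := ⟨Z - Zbar, by abel⟩
    have hD : Zbar + D - Zbar = D := by abel
    rw [hD]
    have hcross : ((ρ₁ • (Q * Zbar) + ρ₂ • Zbar - ρ₂ • U + (Q * Φ + Ψ))ᵀ * D).trace = 0 := by
      rw [hstat, hVdef]
      have : ρ₂ • U - Q * Φ - Ψ - ρ₂ • U + (Q * Φ + Ψ) = 0 := by abel
      rw [this, Matrix.transpose_zero, Matrix.zero_mul, Matrix.trace_zero]
    simp only [Matrix.transpose_add, Matrix.transpose_sub, Matrix.transpose_smul,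
      Matrix.add_mul, Matrix.sub_mul, Matrix.smul_mul, Matrix.trace_add, Matrix.trace_sub,
      Matrix.trace_smul, smul_eq_mul] at hcross
    have e1 : ((Q * Φ)ᵀ * D).trace = (Φᵀ * (Q * D)).trace := by
      rw [Matrix.transpose_mul, hQsym, Matrix.mul_assoc]
    have e2 : ((Q * Zbar)ᵀ * (Q * D)).trace = ((Q * Zbar)ᵀ * D).trace := by
      rw [Matrix.transpose_mul, hQsym, Matrix.mul_assoc, ← Matrix.mul_assoc Q Q D, hQ2, Matrix.mul_assoc]
    have e3 : ((Q * D)ᵀ * (Q * Zbar)).trace = ((Q * Zbar)ᵀ * (Q * D)).trace :=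
      trace_symmA _ _
    have e4 : (Dᵀ * Zbar).trace = (Zbarᵀ * D).trace := trace_symmA _ _
    have e5 : (Dᵀ * U).trace = (Uᵀ * D).trace := trace_symmA _ _
    show (Φᵀ * (Q * (Zbar + D))).trace + (Ψᵀ * (Zbar + D)).trace
        + ρ₁ / 2 * ((Q * (Zbar + D))ᵀ * (Q * (Zbar + D))).trace
        + ρ₂ / 2 * ((Zbar + D - U)ᵀ * (Zbar + D - U)).trace
      = (Φᵀ * (Q * Zbar)).trace + (Ψᵀ * Zbar).trace
        + ρ₁ / 2 * ((Q * Zbar)ᵀ * (Q * Zbar)).trace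
        + ρ₂ / 2 * ((Zbar - U)ᵀ * (Zbar - U)).trace
        + ρ₁ / 2 * ((Q * D)ᵀ * (Q * D)).trace + ρ₂ / 2 * (Dᵀ * D).trace
    simp only [Matrix.mul_add, Matrix.add_mul, Matrix.sub_mul, Matrix.mul_sub,
      Matrix.transpose_add, Matrix.transpose_sub, Matrix.trace_add, Matrix.trace_sub]
    linear_combination hcross - e1 + (ρ₁ / 2) * e3 + ρ₁ * e2 + (ρ₂ / 2) * e4 - (ρ₂ / 2) * e5
  constructor
  · intro Z
    rw [key Z]
    have a1 := mul_nonneg (by linarith : (0:ℝ) ≤ ρ₁ / 2) (trace_sq_nonneg (Q * (Z - Zbar)))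
    have a2 := mul_nonneg (by linarith : (0:ℝ) ≤ ρ₂ / 2) (trace_sq_nonneg (Z - Zbar))
    linarith
  · intro Z hZ
    rw [key Z] at hZ
    have a1 := mul_nonneg (by linarith : (0:ℝ) ≤ ρ₁ / 2) (trace_sq_nonneg (Q * (Z - Zbar)))
    have a2 := mul_nonneg (by linarith : (0:ℝ) ≤ ρ₂ / 2) (trace_sq_nonneg (Z - Zbar))
    have hb : ρ₂ / 2 * ((Z - Zbar)ᵀ * (Z - Zbar)).trace = 0 := by linarith
    have hρ2 : ρ₂ / 2 ≠ 0 := by positivity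
    have hz : ((Z - Zbar)ᵀ * (Z - Zbar)).trace = 0 := (mul_eq_zero.mp hb).resolve_left hρ2
    exact sub_eq_zero.mp (trace_sq_eq_zero hz)
end
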